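/- arXiv:1111.3093 — 3 statements merged into one kernel-verified Lean document; each statement's English description precedes it below -/
import Mathlib

section
/- Let f : ℤ_2 → ℤ_2 be a 1-Lipschitz function (T-function). Then f is bijective modulo 2^k for every k ≥ 1 if and only if each coordinate Boolean function ψ_j of f is linear in its last variable, i.e., for every j ≥ 0 there is a Boolean function φ_j in the variables χ_0, …, χ_{j−1} such that ψ_j(χ_0, …, χ_j) = χ_j ⊕ φ_j(χ_0, …, χ_{j−1}); equivalently, δ_j(f(x + 2^j)) = 1 − δ_j(f(x)) for every x ∈ ℤ_2 and every j ≥ 0. -/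
/-- The map induced by `f : ℤ_[2] → ℤ_[2]` on `ℤ/2^kℤ` (for 1-Lipschitz `f` this is the
well-defined reduction of `f` modulo `2^k`). -/
noncomputable def inducedMod (f : ℤ_[2] → ℤ_[2]) (k : ℕ) : ZMod (2 ^ k) → ZMod (2 ^ k) :=
  fun z => PadicInt.toZModPow k (f ((z.val : ℤ_[2])))

/-- The `j`-th digit of the 2-adic expansion of `x ∈ ℤ_2` (an element of `{0,1} ⊆ ℕ`). -/
noncomputable def digit (j : ℕ) (x : ℤ_[2]) : ℕ :=
  x.appr (j + 1) / 2 ^ j % 2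

/-!
Both conditions say that `f` reflects congruences: `f x ≡ f y (mod 2^k)` forces
`x ≡ y (mod 2^k)`. For bijectivity modulo `2^k` this is injectivity of the induced map on a
finite set. For the digit condition, argue one digit at a time: if `x ≡ y (mod 2^k)` but not
modulo `2^(k+1)`, then `y ≡ x + 2^k (mod 2^(k+1))`, so the `k`-th digit of `f y` is that of
`f (x + 2^k)`, the flip of the `k`-th digit of `f x`; conversely `x` and `x + 2^j` are
congruent modulo `2^j` but not modulo `2^(j+1)`, so reflecting congruences modulo `2^(j+1)`
forces the `j`-th digits of their images to differ.
-/

namespace PadicInt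

variable {p : ℕ} [Fact p.Prime]

theorem toZModPow_eq_iff_dvd_sub {n : ℕ} {x y : ℤ_[p]} :
    toZModPow n x = toZModPow n y ↔ (p : ℤ_[p]) ^ n ∣ x - y := by
  rw [← sub_eq_zero, ← map_sub, ← RingHom.mem_ker, ker_toZModPow, Ideal.mem_span_singleton]

theorem toZModPow_natCast_val (n : ℕ) (z : ZMod (p ^ n)) : toZModPow n (z.val : ℤ_[p]) = z := by
  rw [map_natCast, ZMod.natCast_zmod_val]

theorem val_toZModPow (n : ℕ) (x : ℤ_[p]) : (toZModPow n x).val = x.appr n :=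
  ZMod.val_natCast_of_lt (appr_lt x n)

theorem appr_eq_iff_dvd_sub {n : ℕ} {x y : ℤ_[p]} :
    x.appr n = y.appr n ↔ (p : ℤ_[p]) ^ n ∣ x - y := by
  rw [← toZModPow_eq_iff_dvd_sub, ← val_toZModPow, ← val_toZModPow, (ZMod.val_injective _).eq_iff]

theorem appr_mod_pow (x : ℤ_[p]) {m n : ℕ} (h : m ≤ n) : x.appr n % p ^ m = x.appr m := by
  have hmod : x.appr m ≡ x.appr n [MOD p ^ m] :=
    (Nat.modEq_iff_dvd' (appr_mono x h)).2 (dvd_appr_sub_appr x m n h)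
  rw [← hmod, Nat.mod_eq_of_lt (appr_lt x m)]

theorem pow_dvd_sub_apply_of_norm_sub_le {f : ℤ_[p] → ℤ_[p]}
    (hf : ∀ a b, ‖f a - f b‖ ≤ ‖a - b‖) {n : ℕ} {a b : ℤ_[p]}
    (h : (p : ℤ_[p]) ^ n ∣ a - b) : (p : ℤ_[p]) ^ n ∣ f a - f b := by
  rw [← Ideal.mem_span_singleton, ← norm_le_pow_iff_mem_span_pow] at h ⊢
  exact (hf a b).trans h

end PadicInt

open PadicInt

section Digits

theorem digit_lt_two (j : ℕ) (x : ℤ_[2]) : digit j x < 2 :=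
  Nat.mod_lt _ two_pos

theorem appr_succ_eq_add_digit (j : ℕ) (x : ℤ_[2]) :
    x.appr (j + 1) = x.appr j + 2 ^ j * digit j x := by
  have hdiv : x.appr (j + 1) / 2 ^ j < 2 :=
    Nat.div_lt_of_lt_mul (by simpa [pow_succ, mul_comm] using appr_lt x (j + 1))
  rw [digit, Nat.mod_eq_of_lt hdiv, ← appr_mod_pow x j.le_succ, Nat.mod_add_div]

theorem two_pow_succ_dvd_sub_iff {j : ℕ} {x y : ℤ_[2]} :
    (2 : ℤ_[2]) ^ (j + 1) ∣ x - y ↔ (2 : ℤ_[2]) ^ j ∣ x - y ∧ digit j x = digit j y := by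
  simp only [← Nat.cast_ofNat (R := ℤ_[2]), ← appr_eq_iff_dvd_sub]
  constructor
  · intro h
    refine ⟨?_, by rw [digit, digit, h]⟩
    rw [← appr_mod_pow x j.le_succ, ← appr_mod_pow y j.le_succ, h]
  · rintro ⟨happr, hdigit⟩
    rw [appr_succ_eq_add_digit, appr_succ_eq_add_digit, happr, hdigit]

theorem digit_add_two_pow_ne (j : ℕ) (x : ℤ_[2]) : digit j (x + 2 ^ j) ≠ digit j x := by
  intro h
  have hdvd := two_pow_succ_dvd_sub_iff.2 ⟨by simp, h⟩
  rw [add_sub_cancel_left, pow_dvd_pow_iff two_ne_zero] at hdvd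
  · omega
  · simpa using (irreducible_p (p := 2)).not_isUnit

theorem two_pow_succ_dvd_sub_or_dvd_add_two_pow_sub {k : ℕ} {x y : ℤ_[2]}
    (h : (2 : ℤ_[2]) ^ k ∣ x - y) :
    (2 : ℤ_[2]) ^ (k + 1) ∣ x - y ∨ (2 : ℤ_[2]) ^ (k + 1) ∣ x + 2 ^ k - y := by
  by_cases hdigit : digit k x = digit k y
  · exact .inl (two_pow_succ_dvd_sub_iff.2 ⟨h, hdigit⟩)
  · refine .inr (two_pow_succ_dvd_sub_iff.2 ⟨?_, ?_⟩)
    · simpa [add_sub_right_comm] using h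
    · have := digit_add_two_pow_ne k x
      have := digit_lt_two k x
      have := digit_lt_two k y
      have := digit_lt_two k (x + 2 ^ k)
      omega

end Digits

section TFunction

variable {f : ℤ_[2] → ℤ_[2]} (hf : ∀ a b, ‖f a - f b‖ ≤ ‖a - b‖)
include hf

theorem inducedMod_toZModPow (k : ℕ) (x : ℤ_[2]) :
    inducedMod f k (toZModPow k x) = toZModPow k (f x) :=
  toZModPow_eq_iff_dvd_sub.2 <| pow_dvd_sub_apply_of_norm_sub_le hf <|
    toZModPow_eq_iff_dvd_sub.1 (toZModPow_natCast_val k _)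

theorem injective_inducedMod_iff (k : ℕ) :
    Function.Injective (inducedMod f k) ↔
      ∀ x y, (2 : ℤ_[2]) ^ k ∣ f x - f y → (2 : ℤ_[2]) ^ k ∣ x - y := by
  simp only [← Nat.cast_ofNat (R := ℤ_[2]), ← toZModPow_eq_iff_dvd_sub]
  constructor
  · intro hinj x y h
    apply hinj
    rwa [inducedMod_toZModPow hf, inducedMod_toZModPow hf]
  · intro hrefl z w h
    simpa only [toZModPow_natCast_val] using hrefl _ _ h

theorem digit_apply_add_two_pow {j : ℕ}
    (hrefl : ∀ x y, (2 : ℤ_[2]) ^ (j + 1) ∣ f x - f y → (2 : ℤ_[2]) ^ (j + 1) ∣ x - y)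
    (x : ℤ_[2]) : digit j (f (x + 2 ^ j)) = 1 - digit j (f x) := by
  have hne : digit j (f (x + 2 ^ j)) ≠ digit j (f x) := fun h =>
    digit_add_two_pow_ne j x <| (two_pow_succ_dvd_sub_iff.1 <| hrefl _ _ <|
      two_pow_succ_dvd_sub_iff.2 ⟨pow_dvd_sub_apply_of_norm_sub_le hf (by simp), h⟩).2
  have := digit_lt_two j (f (x + 2 ^ j))
  have := digit_lt_two j (f x)
  omega

theorem two_pow_dvd_sub_of_dvd_apply_sub
    (hflip : ∀ (x : ℤ_[2]) (j : ℕ), digit j (f (x + 2 ^ j)) = 1 - digit j (f x)) (k : ℕ)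
    {x y : ℤ_[2]} (h : (2 : ℤ_[2]) ^ k ∣ f x - f y) : (2 : ℤ_[2]) ^ k ∣ x - y := by
  induction k generalizing x y with
  | zero => simp
  | succ k ih =>
    obtain ⟨hk, hdigit⟩ := two_pow_succ_dvd_sub_iff.1 h
    refine (two_pow_succ_dvd_sub_or_dvd_add_two_pow_sub (ih hk)).resolve_right fun hy => ?_
    have hfy := (two_pow_succ_dvd_sub_iff.1 (pow_dvd_sub_apply_of_norm_sub_le hf hy)).2
    have := hflip x k
    omega

end TFunction

/-- A 1-Lipschitz function (T-function) `f : ℤ_2 → ℤ_2` is bijective modulo `2^k` for every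
`k ≥ 1` if and only if each coordinate Boolean function of `f` is linear in its last variable;
equivalently, `δ_j(f(x + 2^j)) = 1 - δ_j(f(x))` for every `x ∈ ℤ_2` and every `j ≥ 0`. -/
theorem bijective_mod_iff_coordinate_linear
    (f : ℤ_[2] → ℤ_[2]) (hf : ∀ a b : ℤ_[2], ‖f a - f b‖ ≤ ‖a - b‖) :
    (∀ k : ℕ, 1 ≤ k → Function.Bijective (inducedMod f k)) ↔
      ∀ (x : ℤ_[2]) (j : ℕ), digit j (f (x + 2 ^ j)) = 1 - digit j (f x) := by
  constructor
  · intro hbij x j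
    exact digit_apply_add_two_pow hf
      ((injective_inducedMod_iff hf (j + 1)).1 (hbij (j + 1) j.succ_pos).injective) x
  · intro hflip k _
    rw [← Finite.injective_iff_bijective, injective_inducedMod_iff hf]
    exact fun x y => two_pow_dvd_sub_of_dvd_apply_sub hf hflip k
end

section
/- Let f : ℤ_2 → ℤ_2 be a 1-Lipschitz function (T-function). Then f is transitive modulo 2^k for every k ≥ 1 if and only if f is bijective modulo 2^k for every k ≥ 1 (equivalently, each coordinate function satisfies ψ_j(χ_0, …, χ_j) = χ_j ⊕ φ_j(χ_0, …, χ_{j−1})) and, in addition, every Boolean function φ_j has odd weight; concretely, the latter means that for every j ≥ 0 the number of integers x ∈ {0, 1, …, 2^j − 1} such that δ_j(f(x)) = 1 is odd. -/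
open Function

section Orbits

variable {α : Type*} [DecidableEq α] {f : α → α} {x : α}

theorem card_image_range_minimalPeriod :
    ((Finset.range (minimalPeriod f x)).image (f^[·] x)).card = minimalPeriod f x := by
  rw [Finset.card_image_of_injOn, Finset.card_range]
  simpa [Set.InjOn] using iterate_injOn_Iio_minimalPeriod (f := f) (x := x)

theorem forall_exists_iterate_eq_iff_minimalPeriod_eq_card [Fintype α]
    (hx : x ∈ periodicPts f) :
    (∀ z, ∃ n, f^[n] x = z) ↔ minimalPeriod f x = Fintype.card α := by
  rw [← card_image_range_minimalPeriod, Finset.card_eq_iff_eq_univ, Finset.eq_univ_iff_forall]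
  refine forall_congr' fun z => ⟨fun ⟨n, hn⟩ => ?_, fun h => ?_⟩
  · have hpos := minimalPeriod_pos_of_mem_periodicPts hx
    exact Finset.mem_image.2 ⟨n % minimalPeriod f x, Finset.mem_range.2 (Nat.mod_lt _ hpos),
      by rw [iterate_mod_minimalPeriod_eq, hn]⟩
  · obtain ⟨n, -, hn⟩ := Finset.mem_image.1 h
    exact ⟨n, hn⟩

theorem sum_range_minimalPeriod_iterate [Fintype α] {M : Type*} [AddCommMonoid M] (g : α → M)
    (h : minimalPeriod f x = Fintype.card α) :
    ∑ m ∈ Finset.range (minimalPeriod f x), g (f^[m] x) = ∑ y, g y := by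
  have himage : (Finset.range (minimalPeriod f x)).image (f^[·] x) = Finset.univ := by
    rw [← Finset.card_eq_iff_eq_univ, card_image_range_minimalPeriod, h]
  rw [← himage, Finset.sum_image]
  simpa [Set.InjOn] using iterate_injOn_Iio_minimalPeriod (f := f) (x := x)

end Orbits

theorem PadicInt.toZModPow_eq_iff_norm_sub_le {p : ℕ} [Fact p.Prime] {n : ℕ} {a b : ℤ_[p]} :
    PadicInt.toZModPow n a = PadicInt.toZModPow n b ↔ ‖a - b‖ ≤ (p : ℝ) ^ (-n : ℤ) := by
  rw [PadicInt.norm_le_pow_iff_mem_span_pow, ← PadicInt.ker_toZModPow, RingHom.mem_ker, map_sub,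
    sub_eq_zero]

theorem PadicInt.val_toZModPow_s4 {p : ℕ} [Fact p.Prime] (n : ℕ) (x : ℤ_[p]) :
    (PadicInt.toZModPow n x).val = x.appr n :=
  ZMod.val_natCast_of_lt (x.appr_lt n)

theorem ZMod.sum_val_eq_sum_range {M : Type*} [AddCommMonoid M] (n : ℕ) [NeZero n]
    (g : ℕ → M) :
    ∑ y : ZMod n, g y.val = ∑ x ∈ Finset.range n, g x :=
  Finset.sum_nbij' (·.val) (fun x => (x : ZMod n)) (fun y _ => Finset.mem_range.2 (ZMod.val_lt y))
    (fun _ _ => Finset.mem_univ _) (fun y _ => ZMod.natCast_zmod_val y)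
    (fun _ hx => ZMod.val_natCast_of_lt (Finset.mem_range.1 hx)) (fun _ _ => rfl)

theorem natCast_digit (j : ℕ) (x : ℤ_[2]) :
    (digit j x : ZMod 2) = if digit j x = 1 then 1 else 0 := by
  rcases Nat.mod_two_eq_zero_or_one (x.appr (j + 1) / 2 ^ j) with h | h <;> simp [digit, h]

namespace TFunction

variable {k : ℕ}

noncomputable def truncate (k : ℕ) : ZMod (2 ^ (k + 1)) →+* ZMod (2 ^ k) :=
  ZMod.castHom (pow_dvd_pow 2 k.le_succ) _

noncomputable def topBit (k : ℕ) (x : ZMod (2 ^ (k + 1))) : ZMod 2 :=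
  (x.val / 2 ^ k : ℕ)

theorem val_truncate (x : ZMod (2 ^ (k + 1))) : (truncate k x).val = x.val % 2 ^ k := by
  rw [truncate, ZMod.castHom_apply, ← ZMod.natCast_val, ZMod.val_natCast]

theorem truncate_natCast_val (x : ZMod (2 ^ k)) : truncate k (x.val : ZMod (2 ^ (k + 1))) = x := by
  rw [map_natCast, ZMod.natCast_zmod_val]

theorem truncate_two_pow : truncate k (2 ^ k) = 0 := by
  rw [map_pow, map_ofNat]
  exact_mod_cast ZMod.natCast_self (2 ^ k)

theorem val_two_pow : ((2 : ZMod (2 ^ (k + 1))) ^ k).val = 2 ^ k := by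
  exact_mod_cast ZMod.val_natCast_of_lt (Nat.pow_lt_pow_succ one_lt_two : 2 ^ k < 2 ^ (k + 1))

theorem two_pow_ne_zero : (2 : ZMod (2 ^ (k + 1))) ^ k ≠ 0 := by
  intro h
  simpa [h] using (val_two_pow (k := k)).symm

theorem truncate_eq_zero_iff {x : ZMod (2 ^ (k + 1))} :
    truncate k x = 0 ↔ x = 0 ∨ x = 2 ^ k := by
  refine ⟨fun h => ?_, ?_⟩
  · obtain ⟨c, hc⟩ : 2 ^ k ∣ x.val :=
      Nat.dvd_of_mod_eq_zero (by rw [← val_truncate, h, ZMod.val_zero])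
    have hc2 : c < 2 := by
      have hlt := ZMod.val_lt x
      rw [hc, pow_succ] at hlt
      exact Nat.lt_of_mul_lt_mul_left hlt
    interval_cases c
    · exact .inl ((ZMod.val_eq_zero x).1 (by simpa using hc))
    · exact .inr (ZMod.val_injective _ (by rw [val_two_pow, hc, mul_one]))
  · rintro (rfl | rfl)
    exacts [map_zero _, truncate_two_pow]

theorem topBit_add_two_pow (x : ZMod (2 ^ (k + 1))) : topBit k (x + 2 ^ k) = topBit k x + 1 := by
  have hlt := ZMod.val_lt x
  have hpow : 2 ^ (k + 1) = 2 ^ k * 2 := pow_succ 2 k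
  have hpos : 0 < 2 ^ k := Nat.two_pow_pos k
  rw [topBit, topBit, ZMod.val_add, val_two_pow]
  rcases Nat.lt_or_ge x.val (2 ^ k) with hx | hx
  · rw [Nat.mod_eq_of_lt (by omega), Nat.add_div_right _ hpos, Nat.cast_succ]
  · rw [Nat.mod_eq_sub_mod (by omega), Nat.mod_eq_of_lt (by omega), Nat.div_eq_of_lt (by omega),
      Nat.div_eq_of_lt_le (k := 1) (by omega) (by omega)]
    rfl

theorem topBit_natCast_of_lt {n : ℕ} (hn : n < 2 ^ k) :
    topBit k (n : ZMod (2 ^ (k + 1))) = 0 := by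
  rw [topBit, ZMod.val_natCast_of_lt (hn.trans (Nat.pow_lt_pow_succ one_lt_two)),
    Nat.div_eq_of_lt hn, Nat.cast_zero]

theorem topBit_two_pow : topBit k (2 ^ k) = 1 := by
  have h := topBit_add_two_pow (k := k) 0
  rwa [zero_add, show topBit k 0 = 0 by simp [topBit], zero_add] at h

theorem eq_natCast_val_truncate_or (x : ZMod (2 ^ (k + 1))) :
    x = ((truncate k x).val : ZMod (2 ^ (k + 1))) ∨
      x = ((truncate k x).val : ZMod (2 ^ (k + 1))) + 2 ^ k := by
  have := truncate_eq_zero_iff.1 (by rw [map_sub, truncate_natCast_val, sub_self] :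
    truncate k (x - ((truncate k x).val : ZMod (2 ^ (k + 1)))) = 0)
  rw [sub_eq_zero, sub_eq_iff_eq_add] at this
  exact this.imp_right (·.trans (add_comm _ _))

theorem exists_ne_zero_truncate_eq (z : ZMod (2 ^ k)) : ∃ y, y ≠ 0 ∧ truncate k y = z := by
  rcases eq_or_ne (z.val : ZMod (2 ^ (k + 1))) 0 with h | h
  · refine ⟨z.val + 2 ^ k, by rw [h, zero_add]; exact two_pow_ne_zero, ?_⟩
    rw [map_add, truncate_natCast_val, truncate_two_pow, add_zero]
  · exact ⟨_, h, truncate_natCast_val z⟩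

theorem two_pow_add_two_pow : (2 : ZMod (2 ^ (k + 1))) ^ k + 2 ^ k = 0 := by
  rw [← two_mul, ← pow_succ']
  exact_mod_cast ZMod.natCast_self (2 ^ (k + 1))

variable {f : ℤ_[2] → ℤ_[2]}

theorem topBit_inducedMod_natCast {n : ℕ} (hn : n < 2 ^ k) :
    topBit k (inducedMod f (k + 1) n) = digit k (f n) := by
  rw [topBit, inducedMod, ZMod.val_natCast_of_lt (hn.trans (Nat.pow_lt_pow_succ one_lt_two)),
    PadicInt.val_toZModPow_s4, digit, ZMod.natCast_mod]

theorem forall_exists_iterate_inducedMod_iff (hb : Bijective (inducedMod f k)) :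
    (∀ z, ∃ n, (inducedMod f k)^[n] 0 = z) ↔ minimalPeriod (inducedMod f k) 0 = 2 ^ k := by
  rw [forall_exists_iterate_eq_iff_minimalPeriod_eq_card (hb.injective.mem_periodicPts 0),
    ZMod.card]

instance subsingleton_zmod_two_pow_zero : Subsingleton (ZMod (2 ^ 0)) :=
  inferInstanceAs (Subsingleton (ZMod 1))

theorem minimalPeriod_inducedMod_zero : minimalPeriod (inducedMod f 0) 0 = 2 ^ 0 :=
  minimalPeriod_eq_one_of_subsingleton

theorem bijective_inducedMod_zero : Bijective (inducedMod f 0) :=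
  bijective_of_subsingleton _

variable (hf : ∀ a b : ℤ_[2], ‖f a - f b‖ ≤ ‖a - b‖)
include hf

theorem toZModPow_map_eq {a b : ℤ_[2]} (h : PadicInt.toZModPow k a = PadicInt.toZModPow k b) :
    PadicInt.toZModPow k (f a) = PadicInt.toZModPow k (f b) :=
  PadicInt.toZModPow_eq_iff_norm_sub_le.2
    ((hf a b).trans (PadicInt.toZModPow_eq_iff_norm_sub_le.1 h))

theorem semiconj_truncate_inducedMod :
    Semiconj (truncate k) (inducedMod f (k + 1)) (inducedMod f k) := by
  intro x
  rw [inducedMod, inducedMod, truncate, ZMod.castHom_apply, PadicInt.cast_toZModPow _ _ k.le_succ]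
  apply toZModPow_map_eq hf
  rw [map_natCast, map_natCast, ZMod.natCast_zmod_val, ← map_natCast (truncate k),
    ZMod.natCast_zmod_val]
  rfl

theorem inducedMod_add_two_pow (hinj : Injective (inducedMod f (k + 1)))
    (x : ZMod (2 ^ (k + 1))) :
    inducedMod f (k + 1) (x + 2 ^ k) = inducedMod f (k + 1) x + 2 ^ k := by
  have hsub : truncate k (inducedMod f (k + 1) (x + 2 ^ k) - inducedMod f (k + 1) x) = 0 := by
    rw [map_sub, semiconj_truncate_inducedMod hf, semiconj_truncate_inducedMod hf, map_add,
      truncate_two_pow, add_zero, sub_self]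
  rcases truncate_eq_zero_iff.1 hsub with h | h
  · exact absurd (add_eq_left.1 (hinj (sub_eq_zero.1 h))) two_pow_ne_zero
  · exact sub_eq_iff_eq_add'.1 h

theorem topBit_inducedMod (hinj : Injective (inducedMod f (k + 1))) (x : ZMod (2 ^ (k + 1))) :
    topBit k (inducedMod f (k + 1) x) = digit k (f (truncate k x).val) + topBit k x := by
  have hy := ZMod.val_lt (truncate k x)
  have hx := eq_natCast_val_truncate_or x
  generalize (truncate k x).val = y at hx hy ⊢
  rcases hx with rfl | rfl
  · rw [topBit_inducedMod_natCast hy, topBit_natCast_of_lt hy, add_zero]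
  · rw [inducedMod_add_two_pow hf hinj, topBit_add_two_pow, topBit_add_two_pow,
      topBit_inducedMod_natCast hy, topBit_natCast_of_lt hy, zero_add]

theorem topBit_iterate_inducedMod_zero (hinj : Injective (inducedMod f (k + 1))) (n : ℕ) :
    topBit k ((inducedMod f (k + 1))^[n] 0) =
      ∑ m ∈ Finset.range n, (digit k (f ((inducedMod f k)^[m] 0).val) : ZMod 2) := by
  induction n with
  | zero => simp [topBit]
  | succ n ih =>
    rw [iterate_succ_apply', topBit_inducedMod hf hinj, ih, Finset.sum_range_succ, add_comm,
      (semiconj_truncate_inducedMod hf).iterate_right, map_zero]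

theorem bijective_inducedMod_of_forall_exists_iterate_succ
    (hT : ∀ z, ∃ n, (inducedMod f (k + 1))^[n] 0 = z) : Bijective (inducedMod f k) := by
  refine Finite.surjective_iff_bijective.1 fun z => ?_
  obtain ⟨y, hy0, rfl⟩ := exists_ne_zero_truncate_eq z
  obtain ⟨_ | m, hm⟩ := hT y
  · exact absurd hm.symm hy0
  · rw [iterate_succ_apply'] at hm
    exact ⟨_, by rw [← semiconj_truncate_inducedMod hf, hm]⟩

theorem minimalPeriod_inducedMod_succ_eq_iff_odd (hinj : Injective (inducedMod f (k + 1)))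
    (hmp : minimalPeriod (inducedMod f k) 0 = 2 ^ k) :
    minimalPeriod (inducedMod f (k + 1)) 0 = 2 ^ (k + 1) ↔
      Odd ((Finset.range (2 ^ k)).filter (fun x : ℕ => digit k (f (x : ℤ_[2])) = 1)).card := by
  set G := inducedMod f (k + 1)
  have hA : G^[2 ^ k] 0 = 0 ∨ G^[2 ^ k] 0 = 2 ^ k := by
    refine truncate_eq_zero_iff.1 ?_
    rw [(semiconj_truncate_inducedMod hf).iterate_right, map_zero]
    exact isPeriodicPt_iff_minimalPeriod_dvd.2 (dvd_of_eq hmp)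
  have hweight : topBit k (G^[2 ^ k] 0) =
      ((Finset.range (2 ^ k)).filter (fun x : ℕ => digit k (f (x : ℤ_[2])) = 1)).card := by
    have hsum := sum_range_minimalPeriod_iterate (fun y => (digit k (f y.val) : ZMod 2))
      (hmp.trans (ZMod.card _).symm)
    rw [hmp] at hsum
    rw [topBit_iterate_inducedMod_zero hf hinj, hsum,
      ZMod.sum_val_eq_sum_range (2 ^ k) fun x => (digit k (f x) : ZMod 2),
      Finset.natCast_card_filter]
    exact Finset.sum_congr rfl fun x _ => natCast_digit k (f x)
  rw [← ZMod.natCast_eq_one_iff_odd, ← hweight]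
  rcases hA with hA | hA <;> rw [hA]
  · refine iff_of_false (fun h => ?_) (by simp [topBit])
    have hle := IsPeriodicPt.minimalPeriod_le (Nat.two_pow_pos k) hA
    rw [h, pow_succ] at hle
    have := Nat.two_pow_pos k
    omega
  · refine iff_of_true (minimalPeriod_eq_prime_pow (p := 2) ?_ ?_) topBit_two_pow
    · exact fun h => two_pow_ne_zero (hA.symm.trans h)
    · have hcomm : Function.Commute G (· + 2 ^ k) := inducedMod_add_two_pow hf hinj
      have hshift : G^[2 ^ k] (2 ^ k) = G^[2 ^ k] 0 + 2 ^ k := by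
        simpa only [zero_add] using hcomm.iterate_left (2 ^ k) 0
      show G^[2 ^ (k + 1)] 0 = 0
      rw [congrArg (G^[·] 0) (pow_succ 2 k), mul_two, iterate_add_apply, hA, hshift, hA,
        two_pow_add_two_pow]

end TFunction

/-- A 1-Lipschitz function (T-function) `f : ℤ_2 → ℤ_2` is transitive modulo `2^k` for every
`k ≥ 1` (orbit of `0` under the induced map is all of `ℤ/2^kℤ`) if and only if `f` is bijective
modulo `2^k` for every `k ≥ 1` and, in addition, for every `j ≥ 0` the number of integers
`x ∈ {0,…,2^j − 1}` with `δ_j(f(x)) = 1` is odd (i.e. each `φ_j` has odd weight). -/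
theorem transitive_mod_iff_bijective_and_odd_weight
    (f : ℤ_[2] → ℤ_[2]) (hf : ∀ a b : ℤ_[2], ‖f a - f b‖ ≤ ‖a - b‖) :
    (∀ k : ℕ, 1 ≤ k → ∀ z : ZMod (2 ^ k), ∃ n : ℕ, (inducedMod f k)^[n] 0 = z) ↔
      ((∀ k : ℕ, 1 ≤ k → Function.Bijective (inducedMod f k)) ∧
        ∀ j : ℕ,
          Odd ((Finset.range (2 ^ j)).filter (fun (x : ℕ) => digit j (f ((x : ℕ) : ℤ_[2])) = 1)).card) := by
  constructor
  · intro hT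
    have hb k : Bijective (inducedMod f k) :=
      TFunction.bijective_inducedMod_of_forall_exists_iterate_succ hf (hT (k + 1) k.succ_pos)
    have hmp : ∀ k, minimalPeriod (inducedMod f k) 0 = 2 ^ k
      | 0 => TFunction.minimalPeriod_inducedMod_zero
      | k + 1 => (TFunction.forall_exists_iterate_inducedMod_iff (hb _)).1 (hT _ k.succ_pos)
    exact ⟨fun k _ => hb k, fun j =>
      (TFunction.minimalPeriod_inducedMod_succ_eq_iff_odd hf (hb _).injective (hmp j)).1 (hmp _)⟩
  · rintro ⟨hb, hodd⟩
    have hb' : ∀ k, Bijective (inducedMod f k)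
      | 0 => TFunction.bijective_inducedMod_zero
      | k + 1 => hb _ k.succ_pos
    have hmp k : minimalPeriod (inducedMod f k) 0 = 2 ^ k := by
      induction k with
      | zero => exact TFunction.minimalPeriod_inducedMod_zero
      | succ k ih => exact
          (TFunction.minimalPeriod_inducedMod_succ_eq_iff_odd hf (hb' _).injective ih).2 (hodd k)
    exact fun k _ => (TFunction.forall_exists_iterate_inducedMod_iff (hb' k)).2 (hmp k)
end

section
/- Let f : ℤ_2 → ℤ_2 be a 1-Lipschitz function (T-function) with van der Put series f(x) = Σ_{m=0}^∞ B_m·χ(m,x). Then f is bijective modulo 2^k for every k ≥ 1 (i.e., f is measure-preserving) if and only if the following two conditions hold simultaneously: (1) B_0 + B_1 ≡ 1 (mod 2); (2) |B_m|_2 = 2^{−⌊log_2 m⌋} for all m ≥ 2. -/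
/-!
For a 1-Lipschitz `f`, bijectivity modulo `2^(k+1)` follows by induction from bijectivity
modulo `2^k` once `f` separates the two lifts `c` and `c + 2^k` of each residue `c < 2^k`, that is
`f (c + 2^k) ≢ f c (mod 2^(k+1))`; conversely bijectivity forces this separation. At natural
numbers the van der Put series is a finite sum, and comparing the sums gives
`f (c + 2^k) - f c = B (c + 2^k)` for `k ≥ 1` and `f 1 - f 0 = B 1 - B 0`. Since
`c + 2^k ≡ c (mod 2^k)`, the coefficient `B (c + 2^k)` is divisible by `2^k`, so it is not
divisible by `2^(k+1)` exactly when `‖B (c + 2^k)‖ = 2^(-k)`.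
-/

open Filter

/-- The van der Put characteristic function `χ(m,·)`: the characteristic function (with values
in `{0,1} ⊆ ℤ_2`) of the ball `m + 2^{⌊log_2 m⌋+1}ℤ_2`, with the convention `⌊log_2 0⌋ = 0`. -/
noncomputable def vdpChi (m : ℕ) (x : ℤ_[2]) : ℤ_[2] :=
  if ‖x - (m : ℤ_[2])‖ ≤ (2 : ℝ) ^ (-((Nat.log 2 m : ℤ) + 1)) then 1 else 0

namespace PadicInt

variable {p : ℕ} [Fact p.Prime]

theorem pow_dvd_iff_norm_le {x : ℤ_[p]} {n : ℕ} :
    (p : ℤ_[p]) ^ n ∣ x ↔ ‖x‖ ≤ (p : ℝ) ^ (-n : ℤ) := by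
  rw [norm_le_pow_iff_mem_span_pow, Ideal.mem_span_singleton]

theorem norm_eq_pow_iff {x : ℤ_[p]} {n : ℕ} :
    ‖x‖ = (p : ℝ) ^ (-n : ℤ) ↔
      (p : ℤ_[p]) ^ n ∣ x ∧ ¬ (p : ℤ_[p]) ^ (n + 1) ∣ x := by
  rw [pow_dvd_iff_norm_le, pow_dvd_iff_norm_le, Nat.cast_succ, neg_add, ← sub_eq_add_neg,
    ← norm_lt_pow_iff_norm_le_pow_sub_one, not_lt, le_antisymm_iff]

theorem toZModPow_eq_iff_pow_dvd_sub {x y : ℤ_[p]} {n : ℕ} :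
    toZModPow n x = toZModPow n y ↔ (p : ℤ_[p]) ^ n ∣ x - y := by
  rw [← sub_eq_zero, ← map_sub, ← RingHom.mem_ker, ker_toZModPow, Ideal.mem_span_singleton]

theorem pow_dvd_natCast_sub_iff_modEq {a b n : ℕ} :
    (p : ℤ_[p]) ^ n ∣ (a : ℤ_[p]) - b ↔ a ≡ b [MOD p ^ n] := by
  rw [Nat.modEq_iff_dvd, Nat.cast_pow, ← pow_p_dvd_int_iff]
  push_cast
  exact dvd_sub_comm

theorem pow_dvd_sub_of_norm_sub_le {f : ℤ_[p] → ℤ_[p]}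
    (hf : ∀ a b, ‖f a - f b‖ ≤ ‖a - b‖) {x y : ℤ_[p]} {n : ℕ} (h : (p : ℤ_[p]) ^ n ∣ x - y) :
    (p : ℤ_[p]) ^ n ∣ f x - f y :=
  pow_dvd_iff_norm_le.mpr ((hf x y).trans (pow_dvd_iff_norm_le.mp h))

end PadicInt

theorem Nat.eq_add_two_pow_of_modEq {a b k : ℕ} (hab : a < b) (hb : b < 2 ^ (k + 1))
    (h : a ≡ b [MOD 2 ^ k]) : b = a + 2 ^ k := by
  obtain ⟨t, ht⟩ := (Nat.modEq_iff_dvd' hab.le).mp h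
  have ht0 : t ≠ 0 := by rintro rfl; omega
  have ht2 : t < 2 := by
    by_contra! h2
    have := Nat.mul_le_mul_left (2 ^ k) h2
    rw [pow_succ] at hb
    omega
  obtain rfl : t = 1 := by omega
  omega

theorem Nat.log_two_add_two_pow {c k : ℕ} (hc : c < 2 ^ k) : Nat.log 2 (c + 2 ^ k) = k :=
  Nat.log_eq_of_pow_le_of_lt_pow (by omega) (by rw [pow_succ]; omega)

theorem forall_two_le_iff_forall_add_two_pow {Q : ℕ → Prop} :
    (∀ m, 2 ≤ m → Q m) ↔ ∀ k c, c < 2 ^ (k + 1) → Q (c + 2 ^ (k + 1)) := by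
  refine ⟨fun h k c _ => h _ (by have := Nat.one_le_two_pow (n := k); rw [pow_succ]; omega),
    fun h m hm => ?_⟩
  obtain ⟨k, hk⟩ : ∃ k, Nat.log 2 m = k + 1 :=
    Nat.exists_eq_add_one.mpr (Nat.log_pos (by norm_num) hm)
  have hlo := Nat.pow_log_le_self 2 (by omega : m ≠ 0)
  have hhi := Nat.lt_pow_succ_log_self (by norm_num : 1 < 2) m
  rw [hk] at hlo hhi
  have := h k (m - 2 ^ (k + 1)) (by rw [pow_succ _ (k + 1)] at hhi; omega)
  rwa [Nat.sub_add_cancel hlo] at this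

section TFunction

variable {f : ℤ_[2] → ℤ_[2]}

theorem inducedMod_injective_iff {k : ℕ} :
    Function.Injective (inducedMod f k) ↔
      ∀ a b : ℕ, a < 2 ^ k → b < 2 ^ k → (2 : ℤ_[2]) ^ k ∣ f a - f b → a = b := by
  constructor
  · intro h a b ha hb hab
    have hval := congrArg ZMod.val <| @h a b <| by
      simpa only [inducedMod, ZMod.val_natCast_of_lt ha, ZMod.val_natCast_of_lt hb]
        using PadicInt.toZModPow_eq_iff_pow_dvd_sub.mpr hab
    rwa [ZMod.val_natCast_of_lt ha, ZMod.val_natCast_of_lt hb] at hval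
  · intro h z w hzw
    exact ZMod.val_injective _ <| h _ _ (ZMod.val_lt z) (ZMod.val_lt w) <|
      PadicInt.toZModPow_eq_iff_pow_dvd_sub.mp hzw

theorem pow_dvd_map_sub_map_of_modEq (hlip : ∀ a b : ℤ_[2], ‖f a - f b‖ ≤ ‖a - b‖)
    {a b k : ℕ} (h : a ≡ b [MOD 2 ^ k]) :
    (2 : ℤ_[2]) ^ k ∣ f a - f b :=
  PadicInt.pow_dvd_sub_of_norm_sub_le hlip (PadicInt.pow_dvd_natCast_sub_iff_modEq.mpr h)

theorem eq_of_two_pow_dvd_map_sub_map (hlip : ∀ a b : ℤ_[2], ‖f a - f b‖ ≤ ‖a - b‖)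
    (hsep : ∀ k c : ℕ, c < 2 ^ k → ¬ (2 : ℤ_[2]) ^ (k + 1) ∣ f ↑(c + 2 ^ k) - f c) :
    ∀ k a b : ℕ, a < 2 ^ k → b < 2 ^ k → (2 : ℤ_[2]) ^ k ∣ f a - f b → a = b := by
  intro k
  induction k with
  | zero => intro a b ha hb _; omega
  | succ k ih =>
    intro a b ha hb hab
    wlog hle : a ≤ b generalizing a b
    · exact (this b a hb ha (dvd_sub_comm.mp hab) (by omega)).symm
    have hmod : a ≡ b [MOD 2 ^ k] := by
      refine ih _ _ (Nat.mod_lt _ (by positivity)) (Nat.mod_lt _ (by positivity)) ?_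
      have hsplit : f ↑(a % 2 ^ k) - f ↑(b % 2 ^ k) =
          (f a - f b) - (f a - f ↑(a % 2 ^ k)) + (f b - f ↑(b % 2 ^ k)) := by ring
      rw [hsplit]
      exact dvd_add (dvd_sub ((pow_dvd_pow 2 k.le_succ).trans hab)
        (pow_dvd_map_sub_map_of_modEq hlip (Nat.mod_modEq a _).symm))
        (pow_dvd_map_sub_map_of_modEq hlip (Nat.mod_modEq b _).symm)
    rcases hle.eq_or_lt with rfl | hlt
    · rfl
    obtain rfl := Nat.eq_add_two_pow_of_modEq hlt hb hmod
    exact absurd (dvd_sub_comm.mp hab) (hsep k a (by rw [pow_succ] at hb; omega))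

theorem bijective_inducedMod_iff (hlip : ∀ a b : ℤ_[2], ‖f a - f b‖ ≤ ‖a - b‖) :
    (∀ k : ℕ, 1 ≤ k → Function.Bijective (inducedMod f k)) ↔
      ∀ k c : ℕ, c < 2 ^ k → ¬ (2 : ℤ_[2]) ^ (k + 1) ∣ f ↑(c + 2 ^ k) - f c := by
  constructor
  · intro h k c hc hdvd
    have := inducedMod_injective_iff.mp (h (k + 1) (by omega)).injective (c + 2 ^ k) c
      (by rw [pow_succ]; omega) (by rw [pow_succ]; omega) hdvd
    have := Nat.one_le_two_pow (n := k)
    omega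
  · intro h k _
    exact Finite.injective_iff_bijective.mp
      (inducedMod_injective_iff.mpr (eq_of_two_pow_dvd_map_sub_map hlip h k))

end TFunction

section VanDerPut

theorem vdpChi_natCast (j a : ℕ) :
    vdpChi j a = if a % 2 ^ (Nat.log 2 j + 1) = j then 1 else 0 := by
  have hj : j % 2 ^ (Nat.log 2 j + 1) = j :=
    Nat.mod_eq_of_lt (Nat.lt_pow_succ_log_self (by norm_num) j)
  have hball : ‖(a : ℤ_[2]) - j‖ ≤ (2 : ℝ) ^ (-((Nat.log 2 j : ℤ) + 1)) ↔
      a ≡ j [MOD 2 ^ (Nat.log 2 j + 1)] := by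
    rw [← PadicInt.pow_dvd_natCast_sub_iff_modEq]
    convert (PadicInt.pow_dvd_iff_norm_le (p := 2)).symm using 3 <;> push_cast <;> ring
  simp only [vdpChi, hball, Nat.ModEq, hj]

theorem vdpChi_natCast_self (j : ℕ) : vdpChi j j = 1 := by
  rw [vdpChi_natCast, if_pos (Nat.mod_eq_of_lt (Nat.lt_pow_succ_log_self (by norm_num) j))]

theorem vdpChi_natCast_of_lt {j a : ℕ} (h : a < j) : vdpChi j a = 0 := by
  rw [vdpChi_natCast, if_neg]
  exact ((Nat.mod_le _ _).trans_lt h).ne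

theorem vdpChi_natCast_add_two_pow {j k c : ℕ} (hk : 1 ≤ k) (hc : c < 2 ^ k)
    (hj : j ≠ c + 2 ^ k) : vdpChi j ↑(c + 2 ^ k) = vdpChi j c := by
  rw [vdpChi_natCast, vdpChi_natCast]
  rcases le_or_gt (Nat.log 2 j + 1) k with hlog | hlog
  · obtain ⟨d, hd⟩ := pow_dvd_pow 2 hlog
    rw [hd, Nat.add_mul_mod_self_left]
  · have hj0 : j ≠ 0 := by rintro rfl; rw [Nat.log_zero_right] at hlog; omega
    have hjk : 2 ^ k ≤ j := (Nat.pow_le_pow_right (by norm_num) (by omega)).trans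
      (Nat.pow_log_le_self 2 hj0)
    have hsmall : c + 2 ^ k < 2 ^ (Nat.log 2 j + 1) :=
      (by rw [pow_succ]; omega : c + 2 ^ k < 2 ^ (k + 1)).trans_le
        (Nat.pow_le_pow_right (by norm_num) hlog)
    rw [Nat.mod_eq_of_lt hsmall, Nat.mod_eq_of_lt (by omega), if_neg hj.symm, if_neg (by omega)]

variable (B : ℕ → ℤ_[2])

theorem tsum_vdpChi_natCast {a N : ℕ} (ha : a < N) :
    ∑' m, B m * vdpChi m a = ∑ m ∈ Finset.range N, B m * vdpChi m a :=
  tsum_eq_sum fun m hm => by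
    rw [vdpChi_natCast_of_lt (ha.trans_le (not_lt.mp (Finset.mem_range.not.mp hm))), mul_zero]

theorem tsum_vdpChi_one_sub_zero :
    (∑' m, B m * vdpChi m 1) - ∑' m, B m * vdpChi m 0 = B 1 - B 0 := by
  rw [← Nat.cast_one, ← Nat.cast_zero, tsum_vdpChi_natCast B (N := 2) (by norm_num),
    tsum_vdpChi_natCast B (N := 2) (by norm_num)]
  simp only [Finset.sum_range_succ, Finset.sum_range_zero, vdpChi_natCast]
  norm_num

theorem tsum_vdpChi_add_two_pow_sub {k c : ℕ} (hk : 1 ≤ k) (hc : c < 2 ^ k) :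
    (∑' m, B m * vdpChi m ↑(c + 2 ^ k)) - ∑' m, B m * vdpChi m c = B (c + 2 ^ k) := by
  rw [tsum_vdpChi_natCast B (Nat.lt_succ_self _),
    tsum_vdpChi_natCast B (N := c + 2 ^ k + 1) (by omega), Finset.sum_range_succ,
    Finset.sum_range_succ, vdpChi_natCast_self, vdpChi_natCast_of_lt (by omega : c < c + 2 ^ k),
    Finset.sum_congr rfl fun j hj => by
      rw [vdpChi_natCast_add_two_pow hk hc (Finset.mem_range.mp hj).ne]]
  ring

end VanDerPut

theorem two_dvd_add_sub_one_iff (x y : ℤ_[2]) :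
    (2 : ℤ_[2]) ∣ x + y - 1 ↔ ¬ (2 : ℤ_[2]) ∣ y - x := by
  have hker (z : ℤ_[2]) : (2 : ℤ_[2]) ∣ z ↔ PadicInt.toZMod z = 0 := by
    rw [← RingHom.mem_ker, PadicInt.ker_toZMod, PadicInt.maximalIdeal_eq_span_p,
      Ideal.mem_span_singleton]
    rfl
  rw [hker, hker, map_sub, map_add, map_sub, map_one]
  generalize PadicInt.toZMod x = a
  generalize PadicInt.toZMod y = b
  revert a b
  decide

theorem vdp_measure_preservation_criterion_general
    (B : ℕ → ℤ_[2])
    (f : ℤ_[2] → ℤ_[2]) (hlip : ∀ a b : ℤ_[2], ‖f a - f b‖ ≤ ‖a - b‖)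
    (hf : ∀ x : ℤ_[2], f x = ∑' m : ℕ, B m * vdpChi m x) :
    (∀ k : ℕ, 1 ≤ k → Function.Bijective (inducedMod f k)) ↔
      ((2 : ℤ_[2]) ∣ (B 0 + B 1 - 1) ∧
        ∀ m : ℕ, 2 ≤ m → ‖B m‖ = (2 : ℝ) ^ (-(Nat.log 2 m : ℤ))) := by
  have hcoeff {k c : ℕ} (hk : 1 ≤ k) (hc : c < 2 ^ k) :
      f ↑(c + 2 ^ k) - f c = B (c + 2 ^ k) := by
    rw [hf, hf, tsum_vdpChi_add_two_pow_sub B hk hc]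
  rw [bijective_inducedMod_iff hlip, ← Nat.and_forall_add_one,
    forall_two_le_iff_forall_add_two_pow]
  refine and_congr ?_ (forall₂_congr fun k c => imp_congr_right fun hc => ?_)
  · simp only [pow_zero, Nat.lt_one_iff, forall_eq, zero_add, pow_one, Nat.cast_one,
      Nat.cast_zero, hf, tsum_vdpChi_one_sub_zero, two_dvd_add_sub_one_iff]
  · rw [Nat.log_two_add_two_pow hc, ← hcoeff (by omega) hc]
    exact (PadicInt.norm_eq_pow_iff.trans
      (and_iff_right (pow_dvd_map_sub_map_of_modEq hlip (Nat.add_mod_right c _)))).symm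

/-- **Measure-preservation criterion in terms of van der Put coefficients.** A T-function
(1-Lipschitz function) `f : ℤ_2 → ℤ_2` with van der Put series `f x = Σ' m, B m · χ(m,x)`
is bijective modulo `2^k` for every `k ≥ 1` (i.e. measure-preserving) if and only if
(1) `B 0 + B 1 ≡ 1 (mod 2)`, and (2) `‖B m‖ = 2^{-⌊log_2 m⌋}` for all `m ≥ 2`. -/
theorem vdp_measure_preservation_criterion
    (B : ℕ → ℤ_[2]) (hB : Tendsto B atTop (nhds 0))
    (f : ℤ_[2] → ℤ_[2]) (hlip : ∀ a b : ℤ_[2], ‖f a - f b‖ ≤ ‖a - b‖)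
    (hf : ∀ x : ℤ_[2], f x = ∑' m : ℕ, B m * vdpChi m x) :
    (∀ k : ℕ, 1 ≤ k → Function.Bijective (inducedMod f k)) ↔
      ((2 : ℤ_[2]) ∣ (B 0 + B 1 - 1) ∧
        ∀ m : ℕ, 2 ≤ m → ‖B m‖ = (2 : ℝ) ^ (-(Nat.log 2 m : ℤ))) :=
  vdp_measure_preservation_criterion_general B f hlip hf
end
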